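/- For every integer n ≥ 2, the sum over k from 2 to n of H_k/(k−1) equals (1/2)·(H_{n+1}^2 + H_{n+1}^{(2)}) − (2n+1)/(n(n+1))·H_{n+1} + n/(n+1). -/

import Mathlib

/-- The `n`-th harmonic number `H_n = ∑_{k=1}^n 1/k`, with `H_0 = 0`. -/
def H (n : ℕ) : ℚ := ∑ k ∈ Finset.range n, 1 / ((k : ℚ) + 1)

/-- The generalized harmonic number of order 2, `H_n^{(2)} = ∑_{k=1}^n 1/k^2`, with `H_0^{(2)} = 0`. -/
def H2 (n : ℕ) : ℚ := ∑ k ∈ Finset.range n, 1 / ((k : ℚ) + 1) ^ 2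

/-!
The closed form increases by exactly `H_{n+1}/n` from `n` to `n + 1`: substituting
`H_{n+2} = H_{n+1} + 1/(n+2)` and `H_{n+2}^{(2)} = H_{n+1}^{(2)} + 1/(n+2)^2`, the square contributes
`H_{n+1}/(n+2)`, which combines with the change of the linear coefficient to `H_{n+1}/n`, and the
constant terms cancel. Since the closed form vanishes at `n = 1`, induction on `n` finishes the proof.
-/

lemma H_succ (n : ℕ) : H (n + 1) = H n + 1 / ((n : ℚ) + 1) := by
  simp [H, Finset.sum_range_succ]

lemma H2_succ (n : ℕ) : H2 (n + 1) = H2 n + 1 / ((n : ℚ) + 1) ^ 2 := by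
  simp [H2, Finset.sum_range_succ]

def harmonicClosedForm (n : ℕ) : ℚ :=
  (1 / 2) * (H (n + 1) ^ 2 + H2 (n + 1))
    - (2 * (n : ℚ) + 1) / ((n : ℚ) * ((n : ℚ) + 1)) * H (n + 1)
    + (n : ℚ) / ((n : ℚ) + 1)

lemma harmonicClosedForm_one : harmonicClosedForm 1 = 0 := by
  norm_num [harmonicClosedForm, H, H2, Finset.sum_range_succ]

lemma harmonicClosedForm_succ {n : ℕ} (hn : 1 ≤ n) :
    harmonicClosedForm (n + 1) = harmonicClosedForm n + H (n + 1) / n := by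
  have hn0 : (n : ℚ) ≠ 0 := by positivity
  rw [harmonicClosedForm, harmonicClosedForm, H_succ (n + 1), H2_succ (n + 1)]
  push_cast
  field_simp
  ring

lemma sum_Icc_H_div_sub_one {n : ℕ} (hn : 1 ≤ n) :
    ∑ k ∈ Finset.Icc 2 n, H k / ((k : ℚ) - 1) = harmonicClosedForm n := by
  induction n, hn using Nat.le_induction with
  | base => simp [harmonicClosedForm_one]
  | succ n hn ih =>
    rw [Finset.sum_Icc_succ_top (by omega), ih, harmonicClosedForm_succ hn]
    push_cast
    ring

theorem stmt_6 (n : ℕ) (hn : 2 ≤ n) :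
    ∑ k ∈ Finset.Icc 2 n, H k / ((k : ℚ) - 1) =
      (1 / 2) * (H (n + 1) ^ 2 + H2 (n + 1))
        - (2 * (n : ℚ) + 1) / ((n : ℚ) * ((n : ℚ) + 1)) * H (n + 1)
        + (n : ℚ) / ((n : ℚ) + 1) :=
  sum_Icc_H_div_sub_one (by omega)
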